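/- Local sets are invariant under local complementation: if L = D ∪ Odd_G(D) is a local set of G, then L is also a local set of G ⋆ u for every vertex u. Moreover the number of generators of L is the same in G and G ⋆ u. -/

import Mathlib

open scoped Classical

/-- Local complementation of `G` at a vertex `u`: toggle all edges between
distinct neighbors of `u`. -/
def localComp {V : Type*} (G : SimpleGraph V) (u : V) : SimpleGraph V where
  Adj x y := Xor' (G.Adj x y) (x ≠ y ∧ G.Adj u x ∧ G.Adj u y)
  symm := by
    constructor
    intro x y h
    have h1 := G.adj_comm x y
    have h2 : (y ≠ x) ↔ (x ≠ y) := ne_comm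
    simp only [Xor'] at h ⊢
    rw [← h1, h2, and_comm (a := G.Adj u y)]
    exact h
  loopless := by
    constructor
    intro x h
    rcases h with ⟨h1, -⟩ | ⟨⟨h1, -, -⟩, -⟩
    · exact G.irrefl h1
    · exact h1 rfl

/-- The odd neighborhood of a set `D` of vertices. -/
noncomputable def oddN {V : Type*} [Fintype V] (G : SimpleGraph V) (D : Finset V) :
    Finset V :=
  Finset.univ.filter fun v => Odd (D.filter fun d => G.Adj v d).card

/-- A local set of `G`: a set of the form `D ∪ Odd(D)` for some nonempty `D`. -/
noncomputable def IsLocalSet {V : Type*} [Fintype V] (G : SimpleGraph V)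
    (L : Finset V) : Prop :=
  ∃ D : Finset V, D.Nonempty ∧ L = D ∪ oddN G D


/-
A generator `D` of `L` in `G` is turned into a generator of `L` in `G ⋆ u` by toggling `u` exactly
when `u` has an odd number of neighbours in `D`. Working mod 2, local complementation changes the
parity of `|N(v) ∩ D|` by `[u ~ v] (|N(u) ∩ D| + [v ∈ D])`, while toggling `u` changes it by
`[v ~ u]`; for `v ∉ D` the two corrections cancel, so `D ∪ Odd(D)` is preserved. The same
construction in `G ⋆ u` undoes it, because `(G ⋆ u) ⋆ u = G` and the parity at `u` is unchanged;
hence it is a bijection between the generators of `L` in `G` and in `G ⋆ u`.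
-/

open scoped symmDiff

theorem Finset.sum_symmDiff {ι R : Type*} [DecidableEq ι] [Ring R] [CharP R 2]
    (s t : Finset ι) (f : ι → R) :
    ∑ i ∈ s ∆ t, f i = ∑ i ∈ s, f i + ∑ i ∈ t, f i := by
  have hsub : s ∩ t ⊆ s ∪ t := Finset.inter_subset_union
  rw [← Finset.sum_union_inter, symmDiff_eq_sup_sdiff_inf, ← Finset.sum_sdiff hsub]
  simp only [Finset.sup_eq_union, Finset.inf_eq_inter, add_assoc, CharTwo.add_self_eq_zero,
    add_zero]

theorem ZMod.eq_zero_of_ne_one_two {c : ZMod 2} (h : c ≠ 1) : c = 0 := by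
  revert c
  decide

section LocalComplementation

variable {V : Type*} (G : SimpleGraph V) (u : V)

theorem localComp_adj {v w : V} :
    (localComp G u).Adj v w ↔ Xor (G.Adj v w) (v ≠ w ∧ G.Adj u v ∧ G.Adj u w) :=
  Iff.rfl

theorem localComp_adj_center {v : V} : (localComp G u).Adj u v ↔ G.Adj u v := by
  simp [localComp_adj, xor_def]

theorem localComp_localComp : localComp (localComp G u) u = G := by
  ext v w
  simp only [localComp_adj (localComp G u), localComp_adj_center, localComp_adj, xor_def]
  tauto

noncomputable def nbrParity (v : V) (D : Finset V) : ZMod 2 :=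
  ∑ d ∈ D, if G.Adj v d then 1 else 0

theorem mem_oddN_iff [Fintype V] {v : V} {D : Finset V} :
    v ∈ oddN G D ↔ nbrParity G v D = 1 := by
  rw [oddN, Finset.mem_filter_univ, nbrParity, ← Finset.natCast_card_filter,
    ZMod.natCast_eq_one_iff_odd]

theorem nbrParity_singleton_self (v : V) : nbrParity G v {v} = 0 := by
  rw [nbrParity, Finset.sum_singleton, if_neg G.irrefl]

theorem nbrParity_symmDiff_singleton (v w : V) (D : Finset V) :
    nbrParity G v (D ∆ {w}) = nbrParity G v D + if G.Adj v w then 1 else 0 := by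
  rw [nbrParity, Finset.sum_symmDiff, Finset.sum_singleton, nbrParity]

theorem nbrParity_localComp_center (D : Finset V) :
    nbrParity (localComp G u) u D = nbrParity G u D := by
  simp only [nbrParity, localComp_adj_center]

theorem nbrParity_localComp (v : V) (D : Finset V) :
    nbrParity (localComp G u) v D = nbrParity G v D +
      (if G.Adj u v then 1 else 0) * (nbrParity G u D + if v ∈ D then 1 else 0) := by
  have hterm : ∀ d, (if (localComp G u).Adj v d then 1 else 0 : ZMod 2) =
      (if G.Adj v d then 1 else 0) +
        (if G.Adj u v then 1 else 0) * ((if G.Adj u d then 1 else 0) + if d = v then 1 else 0) := by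
    intro d
    rw [localComp_adj]
    grind
  simp only [nbrParity, hterm, Finset.sum_add_distrib, ← Finset.mul_sum, Finset.sum_ite_eq']

noncomputable def localCompGenerator (D : Finset V) : Finset V :=
  if nbrParity G u D = 1 then D ∆ {u} else D

variable {G u}

theorem mem_localCompGenerator_of_ne {v : V} (hvu : v ≠ u) {D : Finset V} :
    v ∈ localCompGenerator G u D ↔ v ∈ D := by
  unfold localCompGenerator
  split_ifs <;> simp [Finset.mem_symmDiff, hvu]

theorem nbrParity_center_localCompGenerator (D : Finset V) :
    nbrParity (localComp G u) u (localCompGenerator G u D) = nbrParity G u D := by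
  rw [nbrParity_localComp_center, localCompGenerator]
  split_ifs
  · rw [nbrParity_symmDiff_singleton, if_neg G.irrefl, add_zero]
  · rfl

theorem nbrParity_localCompGenerator_of_notMem {v : V} {D : Finset V} (hv : v ∉ D) :
    nbrParity (localComp G u) v (localCompGenerator G u D) = nbrParity G v D := by
  have hcorr := nbrParity_localComp G u v D
  rw [if_neg hv, add_zero] at hcorr
  rw [localCompGenerator]
  split_ifs with hodd
  · rw [nbrParity_symmDiff_singleton, hcorr, hodd, mul_one, (localComp G u).adj_comm,
      localComp_adj_center, add_assoc, CharTwo.add_self_eq_zero, add_zero]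
  · rw [hcorr, ZMod.eq_zero_of_ne_one_two hodd, mul_zero, add_zero]

theorem localCompGenerator_nonempty {D : Finset V} (hD : D.Nonempty) :
    (localCompGenerator G u D).Nonempty := by
  rw [localCompGenerator]
  split_ifs with hodd
  · rw [Finset.nonempty_iff_ne_empty]
    intro hempty
    rw [← Finset.bot_eq_empty, symmDiff_eq_bot] at hempty
    rw [hempty, nbrParity_singleton_self] at hodd
    exact zero_ne_one hodd
  · exact hD

theorem union_oddN_localCompGenerator [Fintype V] (D : Finset V) :
    localCompGenerator G u D ∪ oddN (localComp G u) (localCompGenerator G u D) =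
      D ∪ oddN G D := by
  ext v
  simp only [Finset.mem_union, mem_oddN_iff]
  by_cases hvu : v = u
  · subst hvu
    rw [nbrParity_center_localCompGenerator, localCompGenerator]
    split_ifs with hodd <;> simp [hodd]
  · by_cases hv : v ∈ D
    · simp [mem_localCompGenerator_of_ne hvu, hv]
    · rw [mem_localCompGenerator_of_ne hvu, nbrParity_localCompGenerator_of_notMem hv]

theorem localCompGenerator_localCompGenerator (D : Finset V) :
    localCompGenerator (localComp G u) u (localCompGenerator G u D) = D := by
  conv_lhs => rw [localCompGenerator, nbrParity_center_localCompGenerator]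
  rw [localCompGenerator]
  split_ifs <;> simp

end LocalComplementation

section Generators

variable {V : Type*} [Fintype V]

def localSetGenerators (G : SimpleGraph V) (L : Finset V) :
    Set (Finset V) :=
  {D | D.Nonempty ∧ L = D ∪ oddN G D}

theorem localCompGenerator_mem_localSetGenerators {G : SimpleGraph V} {u : V}
    {L D : Finset V} (hD : D ∈ localSetGenerators G L) :
    localCompGenerator G u D ∈ localSetGenerators (localComp G u) L :=
  ⟨localCompGenerator_nonempty hD.1, hD.2.trans (union_oddN_localCompGenerator D).symm⟩

theorem ncard_localSetGenerators_le (G : SimpleGraph V) (u : V) (L : Finset V) :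
    (localSetGenerators G L).ncard ≤ (localSetGenerators (localComp G u) L).ncard :=
  Set.ncard_le_ncard_of_injOn _ (fun _ => localCompGenerator_mem_localSetGenerators)
    (Function.LeftInverse.injective localCompGenerator_localCompGenerator).injOn

end Generators

/-- Local sets are invariant under local complementation, with the same number of
generators. -/
theorem stmt_17 {V : Type*} [Fintype V] (G : SimpleGraph V) (u : V) (L : Finset V)
    (hL : IsLocalSet G L) :
    IsLocalSet (localComp G u) L ∧
      {D : Finset V | D.Nonempty ∧ L = D ∪ oddN G D}.ncard =
        {D : Finset V | D.Nonempty ∧ L = D ∪ oddN (localComp G u) D}.ncard := by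
  obtain ⟨D, hD⟩ := hL
  refine ⟨⟨_, localCompGenerator_mem_localSetGenerators (u := u) hD⟩, ?_⟩
  have hback := ncard_localSetGenerators_le (localComp G u) u L
  rw [localComp_localComp] at hback
  exact (ncard_localSetGenerators_le G u L).antisymm hback
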